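/- Let q be real with 0 < q < 1 and let α ≥ 1 be an integer. Then the sequence n ↦ ζ̃_{E,q}(n|α) = [2:q] · Σ_{m=1}^∞ (−1)^m q^m / [m:q^α]^n (indexed by positive integers n) converges, as n → ∞, to −q² · [2:q^{−1}] = −q(1+q). -/

import Mathlib

open scoped BigOperators

/-- `[x:q] = (q^x - 1)/(q - 1)` with real exponentiation. -/
noncomputable def qNum (q x : ℝ) : ℝ := (q ^ x - 1) / (q - 1)

/-- Weighted `q`-Euler zeta value at a positive integer `n`:
`ζ̃_{E,q}(n|α) = [2:q] ∑_{m≥1} (-1)^m q^m / [m:q^α]^n`. -/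
noncomputable def qEulerZeta (q : ℝ) (α n : ℕ) : ℝ :=
  qNum q 2 * ∑' m : ℕ, (-1 : ℝ) ^ (m + 1) * q ^ (m + 1) / (qNum (q ^ α) ((m : ℝ) + 1)) ^ n

/-!
Since `[1:r] = 1` while `[m:r] > 1` for `m ≥ 2` (as `0 < r = q^α < 1`), the `m`-th term of the
series tends to `0` as `n → ∞` for every `m ≥ 2`, and every term is dominated by `q^m` uniformly
in `n`. Tannery's theorem (dominated convergence for series) leaves only the term `m = 1`,
namely `-q`, and `[2:q] = 1 + q`.
-/

open Filter Topology

lemma qNum_one {r : ℝ} (hr : r ≠ 1) : qNum r 1 = 1 := by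
  rw [qNum, Real.rpow_one, div_self (sub_ne_zero.mpr hr)]

lemma qNum_two {r : ℝ} (hr : r ≠ 1) : qNum r 2 = 1 + r := by
  rw [qNum, Real.rpow_two, div_eq_iff (sub_ne_zero.mpr hr)]
  ring

lemma one_lt_qNum {r x : ℝ} (hr0 : 0 < r) (hr1 : r < 1) (hx : 1 < x) : 1 < qNum r x := by
  rw [qNum, lt_div_iff_of_neg (sub_neg.mpr hr1)]
  linarith [Real.rpow_lt_self_of_lt_one hr0 hr1 hx]

lemma tendsto_tsum_div_pow {β : Type*} {a d : β → ℝ} {b₀ : β}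
    (ha : Summable fun b => ‖a b‖) (hd₀ : d b₀ = 1) (hd : ∀ b ≠ b₀, 1 < d b) :
    Tendsto (fun n : ℕ => ∑' b, a b / d b ^ n) atTop (𝓝 (a b₀)) := by
  classical
  have hd_ge (b : β) : 1 ≤ d b := by
    rcases eq_or_ne b b₀ with rfl | hb
    · exact hd₀.ge
    · exact (hd b hb).le
  have hlim (b : β) :
      Tendsto (fun n : ℕ => a b / d b ^ n) atTop (𝓝 (if b = b₀ then a b else 0)) := by
    split_ifs with hb
    · subst hb
      simp [hd₀]
    · have h := tendsto_pow_atTop_nhds_zero_of_lt_one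
        (inv_nonneg.mpr (zero_le_one.trans (hd_ge b))) (inv_lt_one_of_one_lt₀ (hd b hb))
      simpa [div_eq_mul_inv, inv_pow] using h.const_mul (a b)
  have hbound (n : ℕ) (b : β) : ‖a b / d b ^ n‖ ≤ ‖a b‖ := by
    have hpow : 1 ≤ ‖d b ^ n‖ := by
      rw [norm_pow, Real.norm_of_nonneg (zero_le_one.trans (hd_ge b))]
      exact one_le_pow₀ (hd_ge b)
    rw [norm_div]
    exact div_le_self (norm_nonneg _) hpow
  simpa [tsum_ite_eq] using
    tendsto_tsum_of_dominated_convergence ha hlim (Eventually.of_forall hbound)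

theorem statement6 (q : ℝ) (hq0 : 0 < q) (hq1 : q < 1) (α : ℕ) (hα : 1 ≤ α) :
    Filter.Tendsto (fun n : ℕ => qEulerZeta q α (n + 1)) Filter.atTop
      (nhds (-q * (1 + q))) := by
  have hr0 : 0 < q ^ α := pow_pos hq0 α
  have hr1 : q ^ α < 1 := pow_lt_one₀ hq0.le hq1 (by omega)
  have hsum : Summable fun m : ℕ => ‖(-1 : ℝ) ^ (m + 1) * q ^ (m + 1)‖ := by
    simpa [abs_of_pos hq0, pow_succ] using
      (summable_geometric_of_lt_one hq0.le hq1).mul_right q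
  have hlim := tendsto_tsum_div_pow (d := fun m : ℕ => qNum (q ^ α) ((m : ℝ) + 1)) (b₀ := 0)
    hsum (by simpa using qNum_one hr1.ne)
    (fun m hm => one_lt_qNum hr0 hr1 (by simpa using Nat.pos_of_ne_zero hm))
  simp only [qEulerZeta, qNum_two hq1.ne]
  simpa [mul_comm] using
    (hlim.comp (tendsto_add_atTop_nat 1)).const_mul (1 + q)
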